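/- arXiv:2603.12231 — 3 statements merged into one kernel-verified Lean document; each statement's English description precedes it below -/
import Mathlib

section
/- Let A, B ∈ ℝ^{d×d}, K ≥ 1, W_K = ∑_{k=0}^{K-1} A^k B B^⊤ (A^⊤)^k, and suppose M_A, m_A, M_B, m_B with 0 < m_A ≤ M_A and 0 < m_B ≤ M_B satisfy: ‖A‖₂ ≤ M_A, ‖B‖₂ ≤ M_B, ‖A^⊤ u‖₂ ≥ m_A ‖u‖₂ and ‖B^⊤ u‖₂ ≥ m_B ‖u‖₂ for all u ∈ ℝ^d. Then W_K is positive definite, and for all unit vectors x, y ∈ ℝ^d, x^⊤ W_K x ≤ (M_B/m_B)² · ((∑_{k=0}^{K-1} M_A^{2k}) / (∑_{k=0}^{K-1} m_A^{2k})) · y^⊤ W_K y. In particular the condition number λ_max(W_K)/λ_min(W_K) is at most (M_B/m_B)² (∑_{k=0}^{K-1} M_A^{2k})/(∑_{k=0}^{K-1} m_A^{2k}). -/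
open Matrix
open scoped InnerProductSpace

/-- Apply a real matrix to a Euclidean vector. -/
noncomputable def mulVecE {m n : ℕ} (A : Matrix (Fin m) (Fin n) ℝ)
    (x : EuclideanSpace ℝ (Fin n)) : EuclideanSpace ℝ (Fin m) :=
  Matrix.toEuclideanLin A x

/-- The ℓ²-operator norm (largest singular value) of a real matrix. -/
noncomputable def l2OpNorm {m n : ℕ} (A : Matrix (Fin m) (Fin n) ℝ) : ℝ :=
  ‖LinearMap.toContinuousLinearMap (Matrix.toEuclideanLin A)‖

/-! The quadratic form of the Gramian is `⟪x, W_K x⟫ = ∑ₖ ‖Bᵀ (Aᵀ)ᵏ x‖²`, so the singular-value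
bounds on `A` and `B` sandwich it between `m_B² (∑ₖ m_A^{2k}) ‖x‖²` and `M_B² (∑ₖ M_A^{2k}) ‖x‖²`.
A symmetric matrix whose quadratic form lies between `c ‖x‖²` and `C ‖x‖²` with `c > 0` is
positive definite, and both the ratio of its quadratic-form values at two unit vectors and the
ratio of two of its eigenvalues are at most `C / c`. -/

section mulVecE

variable {l m n : ℕ}

lemma mulVecE_toLp (M : Matrix (Fin m) (Fin n) ℝ) (x : Fin n → ℝ) :
    mulVecE M (WithLp.toLp 2 x) = WithLp.toLp 2 (M *ᵥ x) :=
  rfl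

lemma mulVecE_mul (M : Matrix (Fin l) (Fin m) ℝ) (N : Matrix (Fin m) (Fin n) ℝ)
    (x : EuclideanSpace ℝ (Fin n)) : mulVecE (M * N) x = mulVecE M (mulVecE N x) := by
  simp [mulVecE, toLpLin_apply, mulVec_mulVec]

lemma mulVecE_one (x : EuclideanSpace ℝ (Fin n)) :
    mulVecE (1 : Matrix (Fin n) (Fin n) ℝ) x = x := by
  simp [mulVecE]

lemma mulVecE_sum {ι : Type*} (s : Finset ι) (M : ι → Matrix (Fin m) (Fin n) ℝ)
    (x : EuclideanSpace ℝ (Fin n)) : mulVecE (∑ i ∈ s, M i) x = ∑ i ∈ s, mulVecE (M i) x := by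
  simp [mulVecE]

lemma inner_mulVecE (M : Matrix (Fin m) (Fin n) ℝ) (x : EuclideanSpace ℝ (Fin m))
    (y : EuclideanSpace ℝ (Fin n)) : ⟪x, mulVecE M y⟫_ℝ = ⟪mulVecE Mᵀ x, y⟫_ℝ := by
  rw [mulVecE, mulVecE, ← conjTranspose_eq_transpose_of_trivial,
    toEuclideanLin_conjTranspose_eq_adjoint, LinearMap.adjoint_inner_left]

lemma norm_mulVecE_le (M : Matrix (Fin m) (Fin n) ℝ) (x : EuclideanSpace ℝ (Fin n)) :
    ‖mulVecE M x‖ ≤ l2OpNorm M * ‖x‖ :=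
  (LinearMap.toContinuousLinearMap (toEuclideanLin M)).le_opNorm x

lemma l2OpNorm_nonneg (M : Matrix (Fin m) (Fin n) ℝ) : 0 ≤ l2OpNorm M :=
  norm_nonneg _

open scoped Matrix.Norms.L2Operator in
lemma l2OpNorm_transpose (M : Matrix (Fin m) (Fin n) ℝ) : l2OpNorm Mᵀ = l2OpNorm M := by
  rw [← conjTranspose_eq_transpose_of_trivial]
  exact l2_opNorm_conjTranspose M

lemma norm_mulVecE_pow_le (M : Matrix (Fin n) (Fin n) ℝ) (k : ℕ) (x : EuclideanSpace ℝ (Fin n)) :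
    ‖mulVecE (M ^ k) x‖ ≤ l2OpNorm M ^ k * ‖x‖ := by
  induction k with
  | zero => simp [mulVecE_one]
  | succ k ih =>
    rw [pow_succ' M, mulVecE_mul, pow_succ', mul_assoc]
    exact (norm_mulVecE_le M _).trans (mul_le_mul_of_nonneg_left ih (norm_nonneg _))

lemma le_norm_mulVecE_pow {M : Matrix (Fin n) (Fin n) ℝ} {c : ℝ} (hc : 0 ≤ c)
    (hM : ∀ x, c * ‖x‖ ≤ ‖mulVecE M x‖) (k : ℕ) (x : EuclideanSpace ℝ (Fin n)) :
    c ^ k * ‖x‖ ≤ ‖mulVecE (M ^ k) x‖ := by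
  induction k with
  | zero => simp [mulVecE_one]
  | succ k ih =>
    rw [pow_succ' M, mulVecE_mul, pow_succ', mul_assoc]
    exact (mul_le_mul_of_nonneg_left ih hc).trans (hM _)

end mulVecE

section QuadraticForm

variable {n : ℕ}

lemma inner_mulVecE_toLp (S : Matrix (Fin n) (Fin n) ℝ) (x : Fin n → ℝ) :
    ⟪WithLp.toLp 2 x, mulVecE S (WithLp.toLp 2 x)⟫_ℝ = star x ⬝ᵥ S *ᵥ x := by
  rw [mulVecE_toLp, EuclideanSpace.inner_toLp_toLp, dotProduct_comm]

lemma posDef_of_le_inner_mulVecE {S : Matrix (Fin n) (Fin n) ℝ} (hS : S.IsSymm) {c : ℝ}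
    (hc : 0 < c) (hlow : ∀ x, c * ‖x‖ ^ 2 ≤ ⟪x, mulVecE S x⟫_ℝ) : S.PosDef := by
  refine .of_dotProduct_mulVec_pos (by simpa [IsHermitian] using hS.eq) fun x hx => ?_
  rw [← inner_mulVecE_toLp]
  have hx' : WithLp.toLp 2 x ≠ 0 := by simpa using hx
  exact (by positivity : 0 < c * ‖WithLp.toLp 2 x‖ ^ 2).trans_le (hlow _)

lemma inner_mulVecE_le_div_mul {S : Matrix (Fin n) (Fin n) ℝ} {c C : ℝ} (hc : 0 < c)
    (hlow : ∀ x, c * ‖x‖ ^ 2 ≤ ⟪x, mulVecE S x⟫_ℝ) (hup : ∀ x, ⟪x, mulVecE S x⟫_ℝ ≤ C * ‖x‖ ^ 2)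
    {x y : EuclideanSpace ℝ (Fin n)} (hx : ‖x‖ = 1) (hy : ‖y‖ = 1) :
    ⟪x, mulVecE S x⟫_ℝ ≤ C / c * ⟪y, mulVecE S y⟫_ℝ := by
  have hcC : c ≤ C := by simpa [hx] using (hlow x).trans (hup x)
  calc ⟪x, mulVecE S x⟫_ℝ ≤ C := by simpa [hx] using hup x
    _ = C / c * c := (div_mul_cancel₀ C hc.ne').symm
    _ ≤ C / c * ⟪y, mulVecE S y⟫_ℝ := by
      gcongr
      · exact div_nonneg (hc.le.trans hcC) hc.le
      · simpa [hy] using hlow y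

lemma exists_inner_mulVecE_eq_of_hasEigenvalue {S : Matrix (Fin n) (Fin n) ℝ} {μ : ℝ}
    (hμ : Module.End.HasEigenvalue S.mulVecLin μ) :
    ∃ x : EuclideanSpace ℝ (Fin n), x ≠ 0 ∧ ⟪x, mulVecE S x⟫_ℝ = μ * ‖x‖ ^ 2 := by
  obtain ⟨v, hv⟩ := hμ.exists_hasEigenvector
  refine ⟨WithLp.toLp 2 v, by simpa using hv.2, ?_⟩
  have hSv : S *ᵥ v = μ • v := by simpa using hv.apply_eq_smul
  rw [mulVecE_toLp, hSv, WithLp.toLp_smul, real_inner_smul_right, real_inner_self_eq_norm_sq]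

lemma mem_Icc_of_hasEigenvalue {S : Matrix (Fin n) (Fin n) ℝ} {c C μ : ℝ}
    (hlow : ∀ x, c * ‖x‖ ^ 2 ≤ ⟪x, mulVecE S x⟫_ℝ) (hup : ∀ x, ⟪x, mulVecE S x⟫_ℝ ≤ C * ‖x‖ ^ 2)
    (hμ : Module.End.HasEigenvalue S.mulVecLin μ) : μ ∈ Set.Icc c C := by
  obtain ⟨x, hx, hSx⟩ := exists_inner_mulVecE_eq_of_hasEigenvalue hμ
  have hx2 : 0 < ‖x‖ ^ 2 := by positivity
  exact ⟨le_of_mul_le_mul_right (hSx ▸ hlow x) hx2, le_of_mul_le_mul_right (hSx ▸ hup x) hx2⟩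

lemma hasEigenvalue_le_div_mul {S : Matrix (Fin n) (Fin n) ℝ} {c C μ ν : ℝ} (hc : 0 < c)
    (hlow : ∀ x, c * ‖x‖ ^ 2 ≤ ⟪x, mulVecE S x⟫_ℝ) (hup : ∀ x, ⟪x, mulVecE S x⟫_ℝ ≤ C * ‖x‖ ^ 2)
    (hμ : Module.End.HasEigenvalue S.mulVecLin μ) (hν : Module.End.HasEigenvalue S.mulVecLin ν) :
    μ ≤ C / c * ν := by
  obtain ⟨hcμ, hμC⟩ := mem_Icc_of_hasEigenvalue hlow hup hμ
  calc μ ≤ C := hμC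
    _ = C / c * c := (div_mul_cancel₀ C hc.ne').symm
    _ ≤ C / c * ν := by
      gcongr
      · exact div_nonneg (hc.le.trans (hcμ.trans hμC)) hc.le
      · exact (mem_Icc_of_hasEigenvalue hlow hup hν).1

end QuadraticForm

section Gramian

variable {m n : ℕ}

noncomputable def ctrbGramian (A : Matrix (Fin n) (Fin n) ℝ) (B : Matrix (Fin n) (Fin m) ℝ)
    (K : ℕ) : Matrix (Fin n) (Fin n) ℝ :=
  ∑ k ∈ Finset.range K, A ^ k * B * Bᵀ * Aᵀ ^ k

variable (A : Matrix (Fin n) (Fin n) ℝ) (B : Matrix (Fin n) (Fin m) ℝ) (K : ℕ)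

lemma ctrbGramian_isSymm : (ctrbGramian A B K).IsSymm := by
  simp only [IsSymm, ctrbGramian, transpose_sum, transpose_mul, transpose_pow, transpose_transpose,
    Matrix.mul_assoc]

lemma inner_mulVecE_ctrbGramian (x : EuclideanSpace ℝ (Fin n)) :
    ⟪x, mulVecE (ctrbGramian A B K) x⟫_ℝ =
      ∑ k ∈ Finset.range K, ‖mulVecE Bᵀ (mulVecE (Aᵀ ^ k) x)‖ ^ 2 := by
  rw [ctrbGramian, mulVecE_sum, inner_sum]
  refine Finset.sum_congr rfl fun k _ => ?_
  rw [Matrix.mul_assoc (A ^ k * B), mulVecE_mul, inner_mulVecE, transpose_mul, transpose_pow,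
    mulVecE_mul, real_inner_self_eq_norm_sq]

variable {A B}

lemma inner_mulVecE_ctrbGramian_le {MA MB : ℝ} (hA : l2OpNorm A ≤ MA) (hB : l2OpNorm B ≤ MB)
    (x : EuclideanSpace ℝ (Fin n)) :
    ⟪x, mulVecE (ctrbGramian A B K) x⟫_ℝ ≤
      MB ^ 2 * (∑ k ∈ Finset.range K, MA ^ (2 * k)) * ‖x‖ ^ 2 := by
  rw [inner_mulVecE_ctrbGramian, Finset.mul_sum, Finset.sum_mul]
  refine Finset.sum_le_sum fun k _ => ?_
  have hAT : ‖mulVecE (Aᵀ ^ k) x‖ ≤ MA ^ k * ‖x‖ := by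
    refine (norm_mulVecE_pow_le _ k x).trans ?_
    rw [l2OpNorm_transpose]
    gcongr
    exact l2OpNorm_nonneg A
  have hBT : ‖mulVecE Bᵀ (mulVecE (Aᵀ ^ k) x)‖ ≤ MB * (MA ^ k * ‖x‖) := by
    refine (norm_mulVecE_le _ _).trans ?_
    rw [l2OpNorm_transpose]
    exact mul_le_mul hB hAT (norm_nonneg _) ((l2OpNorm_nonneg B).trans hB)
  calc ‖mulVecE Bᵀ (mulVecE (Aᵀ ^ k) x)‖ ^ 2 ≤ (MB * (MA ^ k * ‖x‖)) ^ 2 := by gcongr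
    _ = MB ^ 2 * MA ^ (2 * k) * ‖x‖ ^ 2 := by ring

lemma le_inner_mulVecE_ctrbGramian {mA mB : ℝ} (hmA : 0 ≤ mA) (hmB : 0 ≤ mB)
    (hAlow : ∀ u, mA * ‖u‖ ≤ ‖mulVecE Aᵀ u‖) (hBlow : ∀ u, mB * ‖u‖ ≤ ‖mulVecE Bᵀ u‖)
    (x : EuclideanSpace ℝ (Fin n)) :
    mB ^ 2 * (∑ k ∈ Finset.range K, mA ^ (2 * k)) * ‖x‖ ^ 2 ≤
      ⟪x, mulVecE (ctrbGramian A B K) x⟫_ℝ := by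
  rw [inner_mulVecE_ctrbGramian, Finset.mul_sum, Finset.sum_mul]
  refine Finset.sum_le_sum fun k _ => ?_
  have hBT : mB * (mA ^ k * ‖x‖) ≤ ‖mulVecE Bᵀ (mulVecE (Aᵀ ^ k) x)‖ :=
    (mul_le_mul_of_nonneg_left (le_norm_mulVecE_pow hmA hAlow k x) hmB).trans (hBlow _)
  calc mB ^ 2 * mA ^ (2 * k) * ‖x‖ ^ 2 = (mB * (mA ^ k * ‖x‖)) ^ 2 := by ring
    _ ≤ ‖mulVecE Bᵀ (mulVecE (Aᵀ ^ k) x)‖ ^ 2 := by gcongr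

end Gramian

theorem gramian_condition_number_bound_general {d : ℕ}
    (A B : Matrix (Fin d) (Fin d) ℝ)
    (K : ℕ) (hK : 1 ≤ K) (MA mA MB mB : ℝ)
    (hmA : 0 < mA) (hmB : 0 < mB)
    (hA : l2OpNorm A ≤ MA) (hB : l2OpNorm B ≤ MB)
    (hAlow : ∀ u : EuclideanSpace ℝ (Fin d), mA * ‖u‖ ≤ ‖mulVecE Aᵀ u‖)
    (hBlow : ∀ u : EuclideanSpace ℝ (Fin d), mB * ‖u‖ ≤ ‖mulVecE Bᵀ u‖)
    (W : Matrix (Fin d) (Fin d) ℝ)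
    (hW : W = ∑ k ∈ Finset.range K, A ^ k * B * Bᵀ * Aᵀ ^ k) :
    W.PosDef
    ∧ (∀ x y : EuclideanSpace ℝ (Fin d), ‖x‖ = 1 → ‖y‖ = 1 →
      ⟪x, mulVecE W x⟫_ℝ ≤ (MB / mB) ^ 2 *
        ((∑ k ∈ Finset.range K, MA ^ (2 * k)) / (∑ k ∈ Finset.range K, mA ^ (2 * k))) *
        ⟪y, mulVecE W y⟫_ℝ)
    ∧ (∀ μ ν : ℝ, Module.End.HasEigenvalue W.mulVecLin μ →
        Module.End.HasEigenvalue W.mulVecLin ν →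
      μ ≤ (MB / mB) ^ 2 *
        ((∑ k ∈ Finset.range K, MA ^ (2 * k)) / (∑ k ∈ Finset.range K, mA ^ (2 * k))) * ν) := by
  rw [show W = ctrbGramian A B K from hW]
  have hSm : 0 < ∑ k ∈ Finset.range K, mA ^ (2 * k) :=
    Finset.sum_pos (fun k _ => by positivity) (Finset.nonempty_range_iff.mpr (by omega))
  have hc : 0 < mB ^ 2 * ∑ k ∈ Finset.range K, mA ^ (2 * k) := by positivity
  have hlow := le_inner_mulVecE_ctrbGramian K hmA.le hmB.le hAlow hBlow
  have hup := inner_mulVecE_ctrbGramian_le K hA hB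
  rw [div_pow, div_mul_div_comm]
  exact ⟨posDef_of_le_inner_mulVecE (ctrbGramian_isSymm A B K) hc hlow,
    fun x y hx hy => inner_mulVecE_le_div_mul hc hlow hup hx hy,
    fun μ ν hμ hν => hasEigenvalue_le_div_mul hc hlow hup hμ hν⟩

/-- Under two-sided singular-value bounds on `A` and `B`, the Gramian `W_K` is positive
definite, the ratio of its quadratic-form values over unit vectors is bounded by
`(M_B/m_B)² (∑ M_A^{2k})/(∑ m_A^{2k})`, and hence so is its condition number
`λ_max(W_K)/λ_min(W_K)`. -/
theorem gramian_condition_number_bound {d : ℕ}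
    (A B : Matrix (Fin d) (Fin d) ℝ)
    (K : ℕ) (hK : 1 ≤ K) (MA mA MB mB : ℝ)
    (hmA : 0 < mA) (hAm : mA ≤ MA) (hmB : 0 < mB) (hBm : mB ≤ MB)
    (hA : l2OpNorm A ≤ MA) (hB : l2OpNorm B ≤ MB)
    (hAlow : ∀ u : EuclideanSpace ℝ (Fin d), mA * ‖u‖ ≤ ‖mulVecE Aᵀ u‖)
    (hBlow : ∀ u : EuclideanSpace ℝ (Fin d), mB * ‖u‖ ≤ ‖mulVecE Bᵀ u‖)
    (W : Matrix (Fin d) (Fin d) ℝ)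
    (hW : W = ∑ k ∈ Finset.range K, A ^ k * B * Bᵀ * Aᵀ ^ k) :
    W.PosDef
    ∧ (∀ x y : EuclideanSpace ℝ (Fin d), ‖x‖ = 1 → ‖y‖ = 1 →
      ⟪x, mulVecE W x⟫_ℝ ≤ (MB / mB) ^ 2 *
        ((∑ k ∈ Finset.range K, MA ^ (2 * k)) / (∑ k ∈ Finset.range K, mA ^ (2 * k))) *
        ⟪y, mulVecE W y⟫_ℝ)
    ∧ (∀ μ ν : ℝ, Module.End.HasEigenvalue W.mulVecLin μ →
        Module.End.HasEigenvalue W.mulVecLin ν →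
      μ ≤ (MB / mB) ^ 2 *
        ((∑ k ∈ Finset.range K, MA ^ (2 * k)) / (∑ k ∈ Finset.range K, mA ^ (2 * k))) * ν) :=
  gramian_condition_number_bound_general A B K hK MA mA MB mB hmA hmB hA hB hAlow hBlow W hW
end

section
/- Let A, B ∈ ℝ^{d×d}, K ≥ 1, W_K = ∑_{k=0}^{K-1} A^k B B^⊤ (A^⊤)^k, and suppose: (i) ‖A − I‖₂ ≤ ε for some 0 ≤ ε < 1 (ε-straight transition), and (ii) there are 0 < m_B ≤ M_B with ‖B‖₂ ≤ M_B and ‖B^⊤ u‖₂ ≥ m_B ‖u‖₂ for all u ∈ ℝ^d. Then W_K is positive definite and for all unit vectors x, y ∈ ℝ^d, x^⊤ W_K x ≤ (M_B/m_B)² ((1+ε)/(1−ε))^{2(K−1)} · y^⊤ W_K y; in particular λ_max(W_K)/λ_min(W_K) ≤ (M_B/m_B)² ((1+ε)/(1−ε))^{2(K−1)}. -/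
/-!
Over `ℝ`, `Bᵀ = star B`, and `Matrix.toEuclideanCLM` is a star-algebra isomorphism, so `W_K` becomes
the operator `∑ₖ Tᵏ S S* (T*)ᵏ` with `T, S` the operators of `A, B`, whose quadratic form is
`⟪x, W_K x⟫ = ∑ₖ ‖S* (T*)ᵏ x‖²`. Since `‖T* - 1‖ = ‖T - 1‖ ≤ ε`, each step of `T*` stretches a vector
by a factor in `[1 - ε, 1 + ε]`, so on unit vectors the `k`-th term lies between
`m_B² (1 - ε)^(2k)` and `M_B² (1 + ε)^(2k)`. Comparing the sums term by term gives the bound on the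
ratio of quadratic forms; the `k = 0` term gives positive definiteness, and an eigenvalue is the
value of the quadratic form at a unit eigenvector.
-/

open Matrix
open scoped InnerProductSpace

open Finset

section NearIdentity

variable {E : Type*} [NormedAddCommGroup E] [NormedSpace ℝ E] {T : E →L[ℝ] E} {ε : ℝ}

theorem ContinuousLinearMap.norm_apply_le_of_norm_sub_one_le (hT : ‖T - 1‖ ≤ ε) (x : E) :
    ‖T x‖ ≤ (1 + ε) * ‖x‖ :=
  calc ‖T x‖ = ‖x + (T - 1) x‖ := by simp
    _ ≤ ‖x‖ + ‖T - 1‖ * ‖x‖ := norm_add_le_of_le le_rfl ((T - 1).le_opNorm x)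
    _ ≤ (1 + ε) * ‖x‖ := by nlinarith [norm_nonneg x]

theorem ContinuousLinearMap.le_norm_apply_of_norm_sub_one_le (hT : ‖T - 1‖ ≤ ε) (x : E) :
    (1 - ε) * ‖x‖ ≤ ‖T x‖ :=
  calc (1 - ε) * ‖x‖ ≤ ‖x‖ - ‖T - 1‖ * ‖x‖ := by nlinarith [norm_nonneg x]
    _ ≤ ‖x‖ - ‖(T - 1) x‖ := by gcongr; exact (T - 1).le_opNorm x
    _ ≤ ‖T x‖ := by simpa using norm_sub_le (T x) ((T - 1) x)

theorem ContinuousLinearMap.norm_pow_apply_le_of_norm_sub_one_le (hT : ‖T - 1‖ ≤ ε) (k : ℕ)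
    (x : E) : ‖(T ^ k) x‖ ≤ (1 + ε) ^ k * ‖x‖ := by
  have hε : 0 ≤ ε := (norm_nonneg _).trans hT
  induction k with
  | zero => simp
  | succ k ih =>
    calc ‖(T ^ (k + 1)) x‖ = ‖T ((T ^ k) x)‖ := by rw [pow_succ']; rfl
      _ ≤ (1 + ε) * ‖(T ^ k) x‖ := norm_apply_le_of_norm_sub_one_le hT _
      _ ≤ (1 + ε) ^ (k + 1) * ‖x‖ := by rw [pow_succ', mul_assoc]; gcongr

theorem ContinuousLinearMap.le_norm_pow_apply_of_norm_sub_one_le (hT : ‖T - 1‖ ≤ ε) (hε : ε ≤ 1)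
    (k : ℕ) (x : E) : (1 - ε) ^ k * ‖x‖ ≤ ‖(T ^ k) x‖ := by
  induction k with
  | zero => simp
  | succ k ih =>
    calc (1 - ε) ^ (k + 1) * ‖x‖ ≤ (1 - ε) * ‖(T ^ k) x‖ := by
          rw [pow_succ', mul_assoc]; gcongr
      _ ≤ ‖T ((T ^ k) x)‖ := le_norm_apply_of_norm_sub_one_le hT _
      _ = ‖(T ^ (k + 1)) x‖ := by rw [pow_succ']; rfl

end NearIdentity

section Gramian

variable {R : Type*} [Semiring R] [StarRing R]

def controllabilityGramian (A B : R) (K : ℕ) : R :=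
  ∑ k ∈ range K, A ^ k * B * star B * star A ^ k

theorem isSelfAdjoint_controllabilityGramian (A B : R) (K : ℕ) :
    IsSelfAdjoint (controllabilityGramian A B K) :=
  isSelfAdjoint_sum _ fun k _ ↦ by
    simpa [mul_assoc, star_mul, star_pow] using IsSelfAdjoint.mul_star_self (A ^ k * B)

theorem map_controllabilityGramian {S F : Type*} [Semiring S] [StarRing S] [FunLike F R S]
    [RingHomClass F R S] [StarHomClass F R S] (f : F) (A B : R) (K : ℕ) :
    f (controllabilityGramian A B K) = controllabilityGramian (f A) (f B) K := by
  simp [controllabilityGramian, map_star]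

end Gramian

section InnerProductSpace

variable {E : Type*} [NormedAddCommGroup E] [InnerProductSpace ℝ E]

theorem Module.End.HasEigenvalue.exists_norm_eq_one_inner_apply_self_eq {f : Module.End ℝ E}
    {μ : ℝ} (hμ : f.HasEigenvalue μ) : ∃ x : E, ‖x‖ = 1 ∧ ⟪x, f x⟫_ℝ = μ := by
  obtain ⟨v, hv⟩ := hμ.exists_hasEigenvector
  have hv0 : ‖v‖ ≠ 0 := norm_ne_zero_iff.2 hv.2
  refine ⟨‖v‖⁻¹ • v, by simp [norm_smul, hv0], ?_⟩
  rw [map_smul, hv.apply_eq_smul, real_inner_smul_left, real_inner_smul_right,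
    real_inner_smul_right, real_inner_self_eq_norm_sq]
  field_simp

variable [CompleteSpace E]

theorem inner_controllabilityGramian_apply_self (T S : E →L[ℝ] E) (K : ℕ) (x : E) :
    ⟪x, controllabilityGramian T S K x⟫_ℝ = ∑ k ∈ range K, ‖star S ((star T ^ k) x)‖ ^ 2 := by
  simp only [controllabilityGramian, _root_.sum_apply, inner_sum]
  refine sum_congr rfl fun k _ ↦ ?_
  set U := star S * star T ^ k
  have hU : T ^ k * S * star S * star T ^ k = star U * U := by
    simp [U, star_mul, star_pow, mul_assoc]
  calc ⟪x, (T ^ k * S * star S * star T ^ k) x⟫_ℝ = ⟪x, star U (U x)⟫_ℝ := by rw [hU]; rfl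
    _ = ⟪U x, U x⟫_ℝ := by
      rw [ContinuousLinearMap.star_eq_adjoint, ContinuousLinearMap.adjoint_inner_right]
    _ = ‖U x‖ ^ 2 := real_inner_self_eq_norm_sq _

theorem inner_controllabilityGramian_apply_self_pos {T S : E →L[ℝ] E} {K : ℕ} (hK : K ≠ 0)
    (hS : Function.Injective ⇑(star S)) {x : E} (hx : x ≠ 0) :
    0 < ⟪x, controllabilityGramian T S K x⟫_ℝ := by
  rw [inner_controllabilityGramian_apply_self]
  refine sum_pos' (fun k _ ↦ by positivity) ⟨0, mem_range.2 (Nat.pos_of_ne_zero hK), ?_⟩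
  have hSx : star S x ≠ 0 := by simpa using hS.ne hx
  simpa using pow_pos (norm_pos_iff.2 hSx) 2

theorem inner_controllabilityGramian_apply_self_le {T S : E →L[ℝ] E} {K : ℕ} {ε mB MB : ℝ}
    (hT : ‖T - 1‖ ≤ ε) (hε : ε < 1) (hmB : 0 < mB) (hS : ‖S‖ ≤ MB)
    (hS_lower : ∀ u, mB * ‖u‖ ≤ ‖star S u‖) {x y : E} (hx : ‖x‖ = 1) (hy : ‖y‖ = 1) :
    ⟪x, controllabilityGramian T S K x⟫_ℝ ≤
      (MB / mB) ^ 2 * ((1 + ε) / (1 - ε)) ^ (2 * (K - 1)) *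
        ⟪y, controllabilityGramian T S K y⟫_ℝ := by
  have hT' : ‖star T - 1‖ ≤ ε := by rwa [← star_one, ← star_sub, norm_star]
  have h1ε : 0 < 1 - ε := by linarith
  have hMB : 0 ≤ MB := (norm_nonneg S).trans hS
  have hratio : 1 ≤ (1 + ε) / (1 - ε) := by
    rw [one_le_div h1ε]; linarith [(norm_nonneg _).trans hT]
  rw [inner_controllabilityGramian_apply_self, inner_controllabilityGramian_apply_self, mul_sum]
  refine sum_le_sum fun k hk ↦ ?_
  have hkK : k ≤ K - 1 := Nat.le_sub_one_of_lt (mem_range.1 hk)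
  have hupper : ‖star S ((star T ^ k) x)‖ ≤ MB * (1 + ε) ^ k :=
    calc ‖star S ((star T ^ k) x)‖ ≤ ‖star S‖ * ‖(star T ^ k) x‖ := (star S).le_opNorm _
      _ ≤ MB * ((1 + ε) ^ k * ‖x‖) := by
        gcongr
        · exact (norm_star S).le.trans hS
        · exact (star T).norm_pow_apply_le_of_norm_sub_one_le hT' k x
      _ = MB * (1 + ε) ^ k := by rw [hx, mul_one]
  have hlower : mB * (1 - ε) ^ k ≤ ‖star S ((star T ^ k) y)‖ :=
    calc mB * (1 - ε) ^ k = mB * ((1 - ε) ^ k * ‖y‖) := by rw [hy, mul_one]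
      _ ≤ mB * ‖(star T ^ k) y‖ := by
        gcongr; exact (star T).le_norm_pow_apply_of_norm_sub_one_le hT' hε.le k y
      _ ≤ ‖star S ((star T ^ k) y)‖ := hS_lower _
  calc ‖star S ((star T ^ k) x)‖ ^ 2 ≤ (MB * (1 + ε) ^ k) ^ 2 := by gcongr
    _ = (MB / mB) ^ 2 * ((1 + ε) / (1 - ε)) ^ (2 * k) * (mB * (1 - ε) ^ k) ^ 2 := by
      rw [div_pow, div_pow, mul_comm 2 k, pow_mul, pow_mul]
      field_simp
    _ ≤ (MB / mB) ^ 2 * ((1 + ε) / (1 - ε)) ^ (2 * (K - 1)) * (mB * (1 - ε) ^ k) ^ 2 := by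
      gcongr
    _ ≤ (MB / mB) ^ 2 * ((1 + ε) / (1 - ε)) ^ (2 * (K - 1)) * ‖star S ((star T ^ k) y)‖ ^ 2 := by
      gcongr

end InnerProductSpace

section MatrixTransport
variable {n : Type*} [Fintype n] [DecidableEq n]

theorem Matrix.hasEigenvalue_toEuclideanLin_iff {M : Matrix n n ℝ} {μ : ℝ} :
    Module.End.HasEigenvalue (toEuclideanLin M) μ ↔ Module.End.HasEigenvalue M.mulVecLin μ := by
  rw [Module.End.hasEigenvalue_iff_mem_spectrum, Module.End.hasEigenvalue_iff_mem_spectrum,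
    ← Matrix.toLin'_apply', spectrum_toLin', ← spectrum_toLpLin 2]

theorem Matrix.posDef_of_inner_toEuclideanCLM_pos {M : Matrix n n ℝ} (hM : M.IsHermitian)
    (hpos : ∀ x : EuclideanSpace ℝ n, x ≠ 0 → 0 < ⟪x, toEuclideanCLM (𝕜 := ℝ) M x⟫_ℝ) :
    M.PosDef :=
  posDef_iff_dotProduct_mulVec.2 ⟨hM, fun v hv ↦ by
    have h := hpos (WithLp.toLp 2 v) (by simpa using hv)
    rw [inner_toEuclideanCLM] at h
    simpa using h⟩

end MatrixTransport

theorem mulVecE_eq_toEuclideanCLM {d : ℕ} (M : Matrix (Fin d) (Fin d) ℝ)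
    (x : EuclideanSpace ℝ (Fin d)) : mulVecE M x = toEuclideanCLM (𝕜 := ℝ) M x :=
  rfl

theorem l2OpNorm_eq_norm_toEuclideanCLM {d : ℕ} (M : Matrix (Fin d) (Fin d) ℝ) :
    l2OpNorm M = ‖toEuclideanCLM (𝕜 := ℝ) M‖ :=
  rfl

theorem eps_straight_gramian_condition_number_general {d : ℕ}
    (A B : Matrix (Fin d) (Fin d) ℝ)
    (K : ℕ) (hK : 1 ≤ K) (ε : ℝ) (hε1 : ε < 1)
    (hA : l2OpNorm (A - 1) ≤ ε)
    (MB mB : ℝ) (hmB : 0 < mB)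
    (hB : l2OpNorm B ≤ MB)
    (hBlow : ∀ u : EuclideanSpace ℝ (Fin d), mB * ‖u‖ ≤ ‖mulVecE Bᵀ u‖)
    (W : Matrix (Fin d) (Fin d) ℝ)
    (hW : W = ∑ k ∈ Finset.range K, A ^ k * B * Bᵀ * Aᵀ ^ k) :
    W.PosDef
    ∧ (∀ x y : EuclideanSpace ℝ (Fin d), ‖x‖ = 1 → ‖y‖ = 1 →
      ⟪x, mulVecE W x⟫_ℝ ≤
        (MB / mB) ^ 2 * ((1 + ε) / (1 - ε)) ^ (2 * (K - 1)) * ⟪y, mulVecE W y⟫_ℝ)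
    ∧ (∀ μ ν : ℝ, Module.End.HasEigenvalue W.mulVecLin μ →
        Module.End.HasEigenvalue W.mulVecLin ν →
      μ ≤ (MB / mB) ^ 2 * ((1 + ε) / (1 - ε)) ^ (2 * (K - 1)) * ν) := by
  have hWG : W = controllabilityGramian A B K := by
    simp [hW, controllabilityGramian, star_eq_conjTranspose]
  set T := toEuclideanCLM (𝕜 := ℝ) A
  set S := toEuclideanCLM (𝕜 := ℝ) B
  have hG : toEuclideanCLM (𝕜 := ℝ) W = controllabilityGramian T S K := by
    rw [hWG, map_controllabilityGramian]
  have hT : ‖T - 1‖ ≤ ε := by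
    rwa [l2OpNorm_eq_norm_toEuclideanCLM, map_sub, map_one] at hA
  have hS : ‖S‖ ≤ MB := by rwa [l2OpNorm_eq_norm_toEuclideanCLM] at hB
  have hS_lower (u : EuclideanSpace ℝ (Fin d)) : mB * ‖u‖ ≤ ‖star S u‖ := by
    rw [← map_star, star_eq_conjTranspose, conjTranspose_eq_transpose_of_trivial,
      ← mulVecE_eq_toEuclideanCLM]
    exact hBlow u
  have hquad (x y : EuclideanSpace ℝ (Fin d)) (hx : ‖x‖ = 1) (hy : ‖y‖ = 1) :
      ⟪x, mulVecE W x⟫_ℝ ≤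
        (MB / mB) ^ 2 * ((1 + ε) / (1 - ε)) ^ (2 * (K - 1)) * ⟪y, mulVecE W y⟫_ℝ := by
    simpa only [mulVecE_eq_toEuclideanCLM, hG] using
      inner_controllabilityGramian_apply_self_le hT hε1 hmB hS hS_lower hx hy
  refine ⟨?_, hquad, fun μ ν hμ hν ↦ ?_⟩
  · have hS_inj : Function.Injective ⇑(star S) := (injective_iff_map_eq_zero _).2 fun u hu ↦
      norm_le_zero_iff.1 <| nonpos_of_mul_nonpos_right (by simpa [hu] using hS_lower u) hmB
    refine posDef_of_inner_toEuclideanCLM_pos ?_ fun x hx ↦ ?_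
    · exact hWG ▸ (isSelfAdjoint_controllabilityGramian A B K).isHermitian
    · exact hG ▸ inner_controllabilityGramian_apply_self_pos (by omega) hS_inj hx
  · obtain ⟨x, hx, rfl⟩ :=
      (hasEigenvalue_toEuclideanLin_iff.2 hμ).exists_norm_eq_one_inner_apply_self_eq
    obtain ⟨y, hy, rfl⟩ :=
      (hasEigenvalue_toEuclideanLin_iff.2 hν).exists_norm_eq_one_inner_apply_self_eq
    exact hquad x y hx hy

/-- For an ε-straight transition (`‖A − I‖₂ ≤ ε < 1`) with two-sided singular-value bounds
on `B`, the Gramian `W_K` is positive definite and its condition number (equivalently the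
ratio of quadratic-form values over unit vectors) is bounded by
`(M_B/m_B)² ((1+ε)/(1−ε))^{2(K−1)}`. -/
theorem eps_straight_gramian_condition_number {d : ℕ}
    (A B : Matrix (Fin d) (Fin d) ℝ)
    (K : ℕ) (hK : 1 ≤ K) (ε : ℝ) (hε0 : 0 ≤ ε) (hε1 : ε < 1)
    (hA : l2OpNorm (A - 1) ≤ ε)
    (MB mB : ℝ) (hmB : 0 < mB) (hBm : mB ≤ MB)
    (hB : l2OpNorm B ≤ MB)
    (hBlow : ∀ u : EuclideanSpace ℝ (Fin d), mB * ‖u‖ ≤ ‖mulVecE Bᵀ u‖)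
    (W : Matrix (Fin d) (Fin d) ℝ)
    (hW : W = ∑ k ∈ Finset.range K, A ^ k * B * Bᵀ * Aᵀ ^ k) :
    W.PosDef
    ∧ (∀ x y : EuclideanSpace ℝ (Fin d), ‖x‖ = 1 → ‖y‖ = 1 →
      ⟪x, mulVecE W x⟫_ℝ ≤
        (MB / mB) ^ 2 * ((1 + ε) / (1 - ε)) ^ (2 * (K - 1)) * ⟪y, mulVecE W y⟫_ℝ)
    ∧ (∀ μ ν : ℝ, Module.End.HasEigenvalue W.mulVecLin μ →
        Module.End.HasEigenvalue W.mulVecLin ν →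
      μ ≤ (MB / mB) ^ 2 * ((1 + ε) / (1 - ε)) ^ (2 * (K - 1)) * ν) :=
  eps_straight_gramian_condition_number_general A B K hK ε hε1 hA MB mB hmB hB hBlow W hW
end

section
/- Let states z_0, …, z_K ∈ ℝ^d (K ≥ 2) evolve under z_{t+1} = A z_t + B a_t with A ∈ ℝ^{d×d}, B ∈ ℝ^{d×d_a}, and actions a_0, …, a_{K−1}. Let v_t := z_{t+1} − z_t and assume ‖v_t‖₂ = c > 0 for all t = 0, …, K−1, and ‖a_{t+1} − a_t‖₂ ≤ Δ for all t. Let C_t := ⟨v_t, v_{t+1}⟩/(‖v_t‖₂‖v_{t+1}‖₂) and v̂_t := v_t/‖v_t‖₂. If the average cosine similarity satisfies (1/(K−1)) ∑_{t=0}^{K−2} C_t ≥ 1 − η for some η ≥ 0, then (1/(K−1)) ∑_{t=0}^{K−2} ‖(A − I) v̂_t‖₂ ≤ √(2η) + ‖B‖₂ Δ / c. -/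
open scoped InnerProductSpace

private lemma mulVecE_le {m n : ℕ} (A : Matrix (Fin m) (Fin n) ℝ)
    (x : EuclideanSpace ℝ (Fin n)) : ‖mulVecE A x‖ ≤ l2OpNorm A * ‖x‖ := by
  simpa [mulVecE, l2OpNorm] using
    (LinearMap.toContinuousLinearMap (Matrix.toEuclideanLin A)).le_opNorm x

set_option maxHeartbeats 1000000 in
/-- Averaged straightness bound: under linear latent dynamics with constant velocity
magnitude `c > 0` and action increments bounded by `Δ`, if the average cosine similarity
of consecutive velocities is at least `1 − η`, then the average deviation from
straightness along the visited unit directions satisfies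
`(1/(K−1)) ∑_{t<K−1} ‖(A − I) v̂_t‖ ≤ √(2η) + ‖B‖₂ Δ / c`. -/
theorem avg_cosine_similarity_controls_straightness {d da : ℕ}
    (K : ℕ) (hK : 2 ≤ K)
    (A : Matrix (Fin d) (Fin d) ℝ) (B : Matrix (Fin d) (Fin da) ℝ)
    (z : ℕ → EuclideanSpace ℝ (Fin d)) (a : ℕ → EuclideanSpace ℝ (Fin da))
    (hdyn : ∀ t, z (t + 1) = mulVecE A (z t) + mulVecE B (a t))
    (v : ℕ → EuclideanSpace ℝ (Fin d)) (hv : ∀ t, v t = z (t + 1) - z t)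
    (c : ℝ) (hc : 0 < c) (hvc : ∀ t ∈ Finset.range K, ‖v t‖ = c)
    (Δ : ℝ) (hΔ : ∀ t ∈ Finset.range (K - 1), ‖a (t + 1) - a t‖ ≤ Δ)
    (Ct : ℕ → ℝ) (hCt : ∀ t, Ct t = ⟪v t, v (t + 1)⟫_ℝ / (‖v t‖ * ‖v (t + 1)‖))
    (η : ℝ) (hη : 0 ≤ η)
    (havg : 1 - η ≤ (1 / ((K : ℝ) - 1)) * ∑ t ∈ Finset.range (K - 1), Ct t) :
    (1 / ((K : ℝ) - 1)) *
        ∑ t ∈ Finset.range (K - 1), ‖mulVecE (A - 1) ((‖v t‖)⁻¹ • v t)‖ ≤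
      Real.sqrt (2 * η) + l2OpNorm B * Δ / c := by
  set N := K - 1 with hNdef
  have hN1 : 1 ≤ N := by omega
  have hKN : (K : ℝ) - 1 = (N : ℝ) := by
    have : K = N + 1 := by omega
    rw [this]; push_cast; ring
  have hNpos : (0 : ℝ) < N := by exact_mod_cast hN1
  rw [hKN] at havg ⊢
  -- per-term facts
  have hCt1 : ∀ t ∈ Finset.range N, Ct t ≤ 1 := by
    intro t ht
    rw [Finset.mem_range] at ht
    have h1 : ‖v t‖ = c := hvc t (by simp [Finset.mem_range]; omega)
    have h2 : ‖v (t + 1)‖ = c := hvc (t + 1) (by simp [Finset.mem_range]; omega)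
    rw [hCt, h1, h2, div_le_one (by positivity)]
    calc ⟪v t, v (t + 1)⟫_ℝ ≤ ‖v t‖ * ‖v (t + 1)‖ := real_inner_le_norm _ _
    _ = c * c := by rw [h1, h2]
  have key : ∀ t ∈ Finset.range N,
      ‖mulVecE (A - 1) ((‖v t‖)⁻¹ • v t)‖ ≤
        Real.sqrt (2 * (1 - Ct t)) + l2OpNorm B * Δ / c := by
    intro t ht
    have htR := Finset.mem_range.mp ht
    have h1 : ‖v t‖ = c := hvc t (by simp [Finset.mem_range]; omega)
    have h2 : ‖v (t + 1)‖ = c := hvc (t + 1) (by simp [Finset.mem_range]; omega)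
    have hrec : v (t + 1) = mulVecE A (v t) + mulVecE B (a (t + 1) - a t) := by
      rw [hv (t + 1), hv t, hdyn (t + 1), hdyn t]
      simp only [mulVecE, map_sub, map_add]
      abel
    have heq : mulVecE (A - 1) ((‖v t‖)⁻¹ • v t)
        = c⁻¹ • ((v (t + 1) - v t) - mulVecE B (a (t + 1) - a t)) := by
      rw [h1, hrec]
      simp only [mulVecE, map_sub, map_smul, map_one]
      simp [Matrix.toEuclideanLin_apply, Matrix.one_mulVec]
      abel
    have hinner : ⟪v t, v (t + 1)⟫_ℝ = Ct t * (c * c) := by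
      rw [hCt, h1, h2]
      field_simp
    have hCle := hCt1 t ht
    have hdist : ‖v (t + 1) - v t‖ = c * Real.sqrt (2 * (1 - Ct t)) := by
      have hsq : ‖v (t + 1) - v t‖ ^ 2 = (c * Real.sqrt (2 * (1 - Ct t))) ^ 2 := by
        rw [norm_sub_sq_real, h1, h2, real_inner_comm, hinner, mul_pow,
          Real.sq_sqrt (by nlinarith)]
        ring
      have h3 : 0 ≤ c * Real.sqrt (2 * (1 - Ct t)) := by positivity
      nlinarith [norm_nonneg (v (t + 1) - v t)]
    rw [heq, norm_smul]
    have hB : ‖mulVecE B (a (t + 1) - a t)‖ ≤ l2OpNorm B * Δ := by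
      calc ‖mulVecE B (a (t + 1) - a t)‖ ≤ l2OpNorm B * ‖a (t + 1) - a t‖ :=
            mulVecE_le _ _
      _ ≤ l2OpNorm B * Δ := by
          have hBnn : 0 ≤ l2OpNorm B := norm_nonneg _
          exact mul_le_mul_of_nonneg_left (hΔ t ht) hBnn
    have htr : ‖(v (t + 1) - v t) - mulVecE B (a (t + 1) - a t)‖ ≤
        c * Real.sqrt (2 * (1 - Ct t)) + l2OpNorm B * Δ := by
      calc _ ≤ ‖v (t + 1) - v t‖ + ‖mulVecE B (a (t + 1) - a t)‖ := norm_sub_le _ _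
      _ ≤ _ := by rw [hdist]; linarith
    have : ‖(c : ℝ)⁻¹‖ = c⁻¹ := by
      rw [Real.norm_eq_abs, abs_of_pos (by positivity)]
    rw [this]
    calc c⁻¹ * ‖(v (t + 1) - v t) - mulVecE B (a (t + 1) - a t)‖
        ≤ c⁻¹ * (c * Real.sqrt (2 * (1 - Ct t)) + l2OpNorm B * Δ) := by
          exact mul_le_mul_of_nonneg_left htr (by positivity)
      _ = Real.sqrt (2 * (1 - Ct t)) + l2OpNorm B * Δ / c := by
          field_simp
  -- sum of sqrt bound via Cauchy-Schwarz
  have hsumCt : (N : ℝ) * (1 - η) ≤ ∑ t ∈ Finset.range N, Ct t := by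
    have := mul_le_mul_of_nonneg_left havg (le_of_lt hNpos)
    calc (N : ℝ) * (1 - η) ≤ (N : ℝ) * ((1 / (N : ℝ)) * ∑ t ∈ Finset.range N, Ct t) :=
          this
    _ = ∑ t ∈ Finset.range N, Ct t := by field_simp
  set S := ∑ t ∈ Finset.range N, Real.sqrt (2 * (1 - Ct t)) with hS
  have hSnn : 0 ≤ S := Finset.sum_nonneg fun t _ => Real.sqrt_nonneg _
  have hSsq : S ^ 2 ≤ (N : ℝ) * ((N : ℝ) * (2 * η)) := by
    have hcs := sq_sum_le_card_mul_sum_sq (s := Finset.range N)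
      (f := fun t => Real.sqrt (2 * (1 - Ct t)))
    have hsq : ∑ t ∈ Finset.range N, (Real.sqrt (2 * (1 - Ct t))) ^ 2
        = ∑ t ∈ Finset.range N, 2 * (1 - Ct t) := by
      apply Finset.sum_congr rfl
      intro t ht
      exact Real.sq_sqrt (by nlinarith [hCt1 t ht])
    have hsum2 : ∑ t ∈ Finset.range N, 2 * (1 - Ct t) ≤ (N : ℝ) * (2 * η) := by
      have hexp : ∑ t ∈ Finset.range N, 2 * (1 - Ct t)
          = 2 * (N : ℝ) - 2 * ∑ t ∈ Finset.range N, Ct t := by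
        rw [← Finset.mul_sum, Finset.sum_sub_distrib, Finset.sum_const,
          Finset.card_range, nsmul_eq_mul, mul_one, mul_sub]
      rw [hexp]
      nlinarith [hsumCt]
    rw [Finset.card_range, hsq] at hcs
    rw [hS]
    exact hcs.trans (mul_le_mul_of_nonneg_left hsum2 (le_of_lt hNpos))
  have hSle : S ≤ (N : ℝ) * Real.sqrt (2 * η) := by
    have h4 : S = Real.sqrt (S ^ 2) := (Real.sqrt_sq hSnn).symm
    rw [h4]
    refine (Real.sqrt_le_sqrt hSsq).trans ?_
    rw [show (N : ℝ) * ((N : ℝ) * (2 * η)) = ((N : ℝ)) ^ 2 * (2 * η) by ring,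
      Real.sqrt_mul (by positivity), Real.sqrt_sq (le_of_lt hNpos)]
  have hsumle : ∑ t ∈ Finset.range N, ‖mulVecE (A - 1) ((‖v t‖)⁻¹ • v t)‖
      ≤ S + (N : ℝ) * (l2OpNorm B * Δ / c) := by
    calc ∑ t ∈ Finset.range N, ‖mulVecE (A - 1) ((‖v t‖)⁻¹ • v t)‖
        ≤ ∑ t ∈ Finset.range N, (Real.sqrt (2 * (1 - Ct t)) + l2OpNorm B * Δ / c) :=
          Finset.sum_le_sum key
    _ = S + (N : ℝ) * (l2OpNorm B * Δ / c) := by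
        rw [Finset.sum_add_distrib, Finset.sum_const, Finset.card_range]
        simp [hS, nsmul_eq_mul]
  calc (1 / (N : ℝ)) * ∑ t ∈ Finset.range N, ‖mulVecE (A - 1) ((‖v t‖)⁻¹ • v t)‖
      ≤ (1 / (N : ℝ)) * ((N : ℝ) * Real.sqrt (2 * η) + (N : ℝ) * (l2OpNorm B * Δ / c)) := by
        apply mul_le_mul_of_nonneg_left _ (by positivity)
        linarith
    _ = Real.sqrt (2 * η) + l2OpNorm B * Δ / c := by
        rw [← mul_add, ← mul_assoc, one_div, inv_mul_cancel₀ (ne_of_gt hNpos), one_mul]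
end
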